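/- Let w, w* ∈ ℝ^n be given by w = ReLU(αy + βz·1) and w* = h_b(αy + βz*·1) componentwise, where h_b(x) = (sqrt(x²+b)+x)/2, b > 0, β ≠ 0, and z, z* ∈ ℝ satisfy 1ᵀw = 1ᵀw* = m. Suppose h_b'(αy_i + βξ) ≥ C > 0 for all i and all ξ in the interval between z and z*. Then ‖w - w*‖₂ ≤ (√n·√b/2)·√(1 + 1/C²). -/

import Mathlib

/-!
Put `g = smoothRelu b`, `u i = α y i + β z`, `v i = α y i + β z*` and `δ = u i - v i = β (z - z*)`.
By the mean value theorem `t i = g (u i) - g (v i)` lies between `C δ` and `δ`, while the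
smoothing gap `s i = g (u i) - ReLU (u i)` lies in `[0, √b / 2]`, and `w i - w* i = t i - s i`.
Equal masses give `∑ t = ∑ s`, so some `t k ≥ s k ≥ 0`, forcing `δ ≥ 0`, and some
`t j ≤ s j ≤ √b / 2`, forcing `C δ ≤ √b / 2`. Hence `0 ≤ t i ≤ √b / (2C)` and
`(t i - s i)² ≤ t i² + s i² ≤ b / 4 * (1 + 1 / C²)`; summing over the `n` coordinates finishes.
-/

open Set Finset

noncomputable def smoothRelu (b x : ℝ) : ℝ := (√(x ^ 2 + b) + x) / 2

noncomputable def smoothReluDeriv (b x : ℝ) : ℝ := (x / √(x ^ 2 + b) + 1) / 2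

theorem hasDerivAt_smoothRelu {b : ℝ} (hb : 0 < b) (x : ℝ) :
    HasDerivAt (smoothRelu b) (smoothReluDeriv b x) x := by
  have hpos : 0 < x ^ 2 + b := by positivity
  have hsqrt := Real.sqrt_pos.mpr hpos
  have h := ((((hasDerivAt_pow 2 x).add_const b).sqrt hpos.ne').add (hasDerivAt_id' x)).div_const 2
  refine h.congr_deriv ?_
  unfold smoothReluDeriv
  field_simp
  ring

theorem smoothReluDeriv_le_one {b : ℝ} (hb : 0 ≤ b) (x : ℝ) : smoothReluDeriv b x ≤ 1 := by
  have : x / √(x ^ 2 + b) ≤ 1 :=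
    div_le_one_of_le₀ ((le_abs_self x).trans (Real.abs_le_sqrt (by linarith))) (Real.sqrt_nonneg _)
  unfold smoothReluDeriv
  linarith

theorem smoothRelu_sub_max_mem_Icc {b : ℝ} (hb : 0 ≤ b) (x : ℝ) :
    smoothRelu b x - max x 0 ∈ Icc 0 (√b / 2) := by
  have hlow : |x| ≤ √(x ^ 2 + b) := Real.abs_le_sqrt (by linarith)
  have hup : √(x ^ 2 + b) ≤ |x| + √b := by
    rw [Real.sqrt_le_left]
    · nlinarith [sq_abs x, Real.sq_sqrt hb, abs_nonneg x, Real.sqrt_nonneg b]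
    · positivity
  unfold smoothRelu
  rcases le_total 0 x with hx | hx
  · rw [abs_of_nonneg hx] at hlow hup
    rw [max_eq_left hx]
    constructor <;> linarith
  · rw [abs_of_nonpos hx] at hlow hup
    rw [max_eq_right hx]
    constructor <;> linarith

theorem exists_mem_uIcc_sub_eq_mul_sub {f f' : ℝ → ℝ} {a b : ℝ}
    (hf : ∀ x ∈ uIcc a b, HasDerivAt f (f' x) x) :
    ∃ c ∈ uIcc a b, f b - f a = f' c * (b - a) := by
  wlog hab : a < b generalizing a b
  · rcases (not_lt.mp hab).eq_or_lt with rfl | hba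
    · exact ⟨_, left_mem_uIcc, by ring⟩
    · obtain ⟨c, hc, h⟩ := this (fun x hx => hf x (uIcc_comm a b ▸ hx)) hba
      exact ⟨c, uIcc_comm a b ▸ hc, by linarith⟩
  have hcont : ContinuousOn f (Icc a b) := fun x hx =>
    (hf x (Icc_subset_uIcc hx)).continuousAt.continuousWithinAt
  obtain ⟨c, hc, hslope⟩ := exists_hasDerivAt_eq_slope f f' hab hcont
    fun x hx => hf x (Icc_subset_uIcc (Ioo_subset_Icc_self hx))
  refine ⟨c, Icc_subset_uIcc (Ioo_subset_Icc_self hc), ?_⟩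
  rw [hslope, div_mul_cancel₀ _ (sub_ne_zero.mpr hab.ne')]

theorem sub_mem_uIcc_of_hasDerivAt {f f' : ℝ → ℝ} {a b C D : ℝ}
    (hf : ∀ x ∈ uIcc a b, HasDerivAt f (f' x) x) (hf' : ∀ x ∈ uIcc a b, f' x ∈ Icc C D) :
    f b - f a ∈ uIcc (C * (b - a)) (D * (b - a)) := by
  obtain ⟨c, hc, h⟩ := exists_mem_uIcc_sub_eq_mul_sub hf
  rw [h, ← image_mul_const_uIcc]
  exact mem_image_of_mem _ (Icc_subset_uIcc (hf' c hc))

theorem image_affine_uIcc {K : Type*} [Field K] [LinearOrder K] [IsStrictOrderedRing K]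
    (c β a b : K) : (fun ξ => c + β * ξ) '' uIcc a b = uIcc (c + β * a) (c + β * b) := by
  rw [← image_const_add_uIcc, ← image_const_mul_uIcc, image_image]

section

variable {ι : Type*} [Fintype ι] {t s : ι → ℝ} {δ C B : ℝ}

theorem nonneg_and_mul_le_of_sum_eq (hC : 0 < C) (hC1 : C ≤ 1)
    (ht : ∀ i, t i ∈ uIcc (C * δ) δ) (hs : ∀ i, s i ∈ Icc 0 B)
    (hsum : ∑ i, t i = ∑ i, s i) [Nonempty ι] : 0 ≤ δ ∧ C * δ ≤ B := by
  obtain ⟨k, -, hk⟩ := exists_le_of_sum_le univ_nonempty hsum.ge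
  obtain ⟨j, -, hj⟩ := exists_le_of_sum_le univ_nonempty hsum.le
  have hδ : 0 ≤ δ := by
    by_contra! hneg
    rcases mem_uIcc.mp (ht k) with h | h <;> nlinarith [(hs k).1]
  refine ⟨hδ, ?_⟩
  rw [uIcc_of_le (mul_le_of_le_one_left hδ hC1)] at ht
  linarith [(ht j).1, (hs j).2]

theorem sq_sub_le_of_sum_eq (hC : 0 < C) (hC1 : C ≤ 1)
    (ht : ∀ i, t i ∈ uIcc (C * δ) δ) (hs : ∀ i, s i ∈ Icc 0 B)
    (hsum : ∑ i, t i = ∑ i, s i) (i : ι) : (t i - s i) ^ 2 ≤ B ^ 2 * (1 + 1 / C ^ 2) := by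
  have : Nonempty ι := ⟨i⟩
  obtain ⟨hδ, hCδ⟩ := nonneg_and_mul_le_of_sum_eq hC hC1 ht hs hsum
  rw [uIcc_of_le (mul_le_of_le_one_left hδ hC1)] at ht
  obtain ⟨hCδt, htδ⟩ := ht i
  obtain ⟨hs0, hsB⟩ := hs i
  have ht0 : 0 ≤ t i := (mul_nonneg hC.le hδ).trans hCδt
  have htB : t i ≤ B / C := by
    rw [le_div_iff₀ hC]
    linarith [mul_le_mul_of_nonneg_left htδ hC.le]
  calc (t i - s i) ^ 2 ≤ t i ^ 2 + s i ^ 2 := by nlinarith [mul_nonneg ht0 hs0]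
    _ ≤ (B / C) ^ 2 + B ^ 2 := by gcongr
    _ = B ^ 2 * (1 + 1 / C ^ 2) := by ring

end

theorem stmt_10_general (n : ℕ) (y : Fin n → ℝ) (α β b m : ℝ)
    (hb : 0 < b) (z zstar : ℝ) (C : ℝ) (hC : 0 < C) (hC1 : C ≤ 1)
    (w wstar : Fin n → ℝ)
    (hw : ∀ i, w i = max (α * y i + β * z) 0)
    (hwstar : ∀ i, wstar i =
      (Real.sqrt ((α * y i + β * zstar) ^ 2 + b) + (α * y i + β * zstar)) / 2)
    (hsum : ∑ i, w i = m) (hsumstar : ∑ i, wstar i = m)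
    (hderiv : ∀ i, ∀ ξ ∈ Set.uIcc z zstar,
      C ≤ ((α * y i + β * ξ) / Real.sqrt ((α * y i + β * ξ) ^ 2 + b) + 1) / 2) :
    Real.sqrt (∑ i, (w i - wstar i) ^ 2) ≤
      Real.sqrt n * Real.sqrt b / 2 * Real.sqrt (1 + 1 / C ^ 2) := by
  set u : Fin n → ℝ := fun i => α * y i + β * z
  set v : Fin n → ℝ := fun i => α * y i + β * zstar
  have hwstar' : ∀ i, wstar i = smoothRelu b (v i) := hwstar
  have hstep : ∀ i, smoothRelu b (u i) - smoothRelu b (v i) ∈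
      uIcc (C * (β * (z - zstar))) (β * (z - zstar)) := by
    intro i
    have hderiv' : ∀ x ∈ uIcc (v i) (u i), smoothReluDeriv b x ∈ Icc C 1 := by
      rw [← image_affine_uIcc, Set.uIcc_comm]
      rintro _ ⟨ξ, hξ, rfl⟩
      exact ⟨hderiv i ξ hξ, smoothReluDeriv_le_one hb.le _⟩
    simpa [u, v, mul_sub] using
      sub_mem_uIcc_of_hasDerivAt (fun x _ => hasDerivAt_smoothRelu hb x) hderiv'
  have hgap : ∀ i, smoothRelu b (u i) - w i ∈ Icc 0 (√b / 2) := fun i =>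
    hw i ▸ smoothRelu_sub_max_mem_Icc hb.le (u i)
  have hsum_eq : ∑ i, (smoothRelu b (u i) - smoothRelu b (v i)) =
      ∑ i, (smoothRelu b (u i) - w i) := by
    simp only [Finset.sum_sub_distrib, ← hwstar', hsum, hsumstar]
  have hcomp : ∀ i, (w i - wstar i) ^ 2 ≤ (√b / 2) ^ 2 * (1 + 1 / C ^ 2) := fun i => by
    simpa [hwstar'] using sq_sub_le_of_sum_eq hC hC1 hstep hgap hsum_eq i
  calc √(∑ i, (w i - wstar i) ^ 2) ≤ √(n * ((√b / 2) ^ 2 * (1 + 1 / C ^ 2))) := by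
        gcongr
        simpa using Finset.sum_le_card_nsmul univ _ _ fun i _ => hcomp i
    _ = _ := by
        rw [Real.sqrt_mul (by positivity), Real.sqrt_mul (by positivity),
          Real.sqrt_sq (by positivity)]
        ring

theorem stmt_10 (n : ℕ) (hn : 0 < n) (y : Fin n → ℝ) (α β b m : ℝ)
    (hβ : β ≠ 0) (hb : 0 < b) (z zstar : ℝ) (C : ℝ) (hC : 0 < C) (hC1 : C ≤ 1)
    (w wstar : Fin n → ℝ)
    (hw : ∀ i, w i = max (α * y i + β * z) 0)
    (hwstar : ∀ i, wstar i =
      (Real.sqrt ((α * y i + β * zstar) ^ 2 + b) + (α * y i + β * zstar)) / 2)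
    (hsum : ∑ i, w i = m) (hsumstar : ∑ i, wstar i = m)
    (hderiv : ∀ i, ∀ ξ ∈ Set.uIcc z zstar,
      C ≤ ((α * y i + β * ξ) / Real.sqrt ((α * y i + β * ξ) ^ 2 + b) + 1) / 2) :
    Real.sqrt (∑ i, (w i - wstar i) ^ 2) ≤
      Real.sqrt n * Real.sqrt b / 2 * Real.sqrt (1 + 1 / C ^ 2) :=
  stmt_10_general n y α β b m hb z zstar C hC hC1 w wstar hw hwstar hsum hsumstar hderiv
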